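/- The space of linear maps α₁ : sl₂(K) → sl₂(K) such that (sl₂(K), [·,·]₀, α₁) is a Hom–Lie algebra is a 6-dimensional K-subspace of End(sl₂(K)), parametrized freely by the matrix entries a₁₁, a₁₂, a₁₃, a₂₂, a₂₃, a₃₂ with a₂₁ = 2a₁₃, a₃₁ = 2a₁₂, a₃₃ = a₂₂. -/
import Mathlib

def br0 {K : Type*} [CommRing K] (u v : Fin 3 → K) : Fin 3 → K :=
  ![u 1 * v 2 - u 2 * v 1,
    2 * (u 0 * v 1 - u 1 * v 0),
    -2 * (u 0 * v 2 - u 2 * v 0)]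

def matMap {K : Type*} [CommRing K] (a : Matrix (Fin 3) (Fin 3) K)
    (v : Fin 3 → K) : Fin 3 → K := fun i => ∑ j, a i j * v j

lemma br0_apply0 {K : Type*} [CommRing K] (u v : Fin 3 → K) :
    br0 u v 0 = u 1 * v 2 - u 2 * v 1 := rfl

lemma br0_apply1 {K : Type*} [CommRing K] (u v : Fin 3 → K) :
    br0 u v 1 = 2 * (u 0 * v 1 - u 1 * v 0) := rfl

lemma br0_apply2 {K : Type*} [CommRing K] (u v : Fin 3 → K) :
    br0 u v 2 = -2 * (u 0 * v 2 - u 2 * v 0) := rfl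

lemma matMap_apply {K : Type*} [CommRing K] (a : Matrix (Fin 3) (Fin 3) K)
    (v : Fin 3 → K) (i : Fin 3) :
    matMap a v i = a i 0 * v 0 + a i 1 * v 1 + a i 2 * v 2 := by
  simp [matMap, Fin.sum_univ_three]

def homLieTwists (K : Type*) [Field K] : Submodule K (Matrix (Fin 3) (Fin 3) K) where
  carrier := {a | a 1 0 = 2 * a 0 2 ∧ a 2 0 = 2 * a 0 1 ∧ a 2 2 = a 1 1}
  add_mem' := by
    rintro a b ⟨h1, h2, h3⟩ ⟨g1, g2, g3⟩
    refine ⟨?_, ?_, ?_⟩ <;> simp only [Matrix.add_apply, h1, h2, h3, g1, g2, g3] <;> ring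
  zero_mem' := by
    refine ⟨?_, ?_, ?_⟩ <;> simp
  smul_mem' := by
    rintro c a ⟨h1, h2, h3⟩
    refine ⟨?_, ?_, ?_⟩ <;> simp only [Matrix.smul_apply, h1, h2, h3, smul_eq_mul] <;> ring

def relMap (K : Type*) [Field K] : Matrix (Fin 3) (Fin 3) K →ₗ[K] (Fin 3 → K) where
  toFun a := ![a 1 0 - 2 * a 0 2, a 2 0 - 2 * a 0 1, a 2 2 - a 1 1]
  map_add' a b := by
    funext i; fin_cases i <;> simp [Matrix.add_apply] <;> ring
  map_smul' c a := by
    funext i; fin_cases i <;> simp [Matrix.smul_apply] <;> ring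

lemma homLieTwists_eq_ker (K : Type*) [Field K] :
    homLieTwists K = LinearMap.ker (relMap K) := by
  ext a
  simp only [homLieTwists, Submodule.mem_mk, AddSubmonoid.mem_mk, AddSubsemigroup.mem_mk,
    Set.mem_setOf_eq, LinearMap.mem_ker, relMap, LinearMap.coe_mk, AddHom.coe_mk]
  constructor
  · rintro ⟨h1, h2, h3⟩
    funext i; fin_cases i <;> simp [h1, h2, h3]
  · intro h
    refine ⟨?_, ?_, ?_⟩ <;>
      [have := congrFun h 0; have := congrFun h 1; have := congrFun h 2] <;>
      simp at this <;> linear_combination this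

theorem stmt13 {K : Type*} [Field K] [CharZero K] :
    (∀ a : Matrix (Fin 3) (Fin 3) K,
      (∀ x y z : Fin 3 → K,
          br0 (matMap a x) (br0 y z) + br0 (matMap a y) (br0 z x)
            + br0 (matMap a z) (br0 x y) = 0)
        ↔ a ∈ homLieTwists K)
    ∧ Module.finrank K (homLieTwists K) = 6 := by
  constructor
  · intro a
    constructor
    · intro h
      have h0 := h ![1,0,0] ![0,1,0] ![0,0,1]
      refine ⟨?_, ?_, ?_⟩
      · have := congrFun h0 1
        simp [br0, matMap, Fin.sum_univ_three, Pi.add_apply] at this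
        linear_combination -this/2
      · have := congrFun h0 2
        simp [br0, matMap, Fin.sum_univ_three, Pi.add_apply] at this
        linear_combination this/2
      · have := congrFun h0 0
        simp [br0, matMap, Fin.sum_univ_three, Pi.add_apply] at this
        linear_combination -this/2
    · rintro ⟨h1, h2, h3⟩ x y z
      have e0 : (br0 (matMap a x) (br0 y z) + br0 (matMap a y) (br0 z x)
          + br0 (matMap a z) (br0 x y)) 0 = 0 := by
        simp only [Pi.add_apply, br0_apply0, br0_apply1, br0_apply2, matMap_apply, h1, h2, h3]
        ring
      have e1 : (br0 (matMap a x) (br0 y z) + br0 (matMap a y) (br0 z x)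
          + br0 (matMap a z) (br0 x y)) 1 = 0 := by
        simp only [Pi.add_apply, br0_apply0, br0_apply1, br0_apply2, matMap_apply, h1, h2, h3]
        ring
      have e2 : (br0 (matMap a x) (br0 y z) + br0 (matMap a y) (br0 z x)
          + br0 (matMap a z) (br0 x y)) 2 = 0 := by
        simp only [Pi.add_apply, br0_apply0, br0_apply1, br0_apply2, matMap_apply, h1, h2, h3]
        ring
      funext i
      fin_cases i
      · exact e0
      · exact e1
      · exact e2
  · have hsurj : Function.Surjective (relMap K) := by
      intro v
      refine ⟨Matrix.of ![![0,0,0],![v 0,0,0],![v 1,0,v 2]], ?_⟩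
      funext i; fin_cases i <;> simp [relMap]
    have h1 := LinearMap.finrank_range_add_finrank_ker (relMap K)
    rw [LinearMap.range_eq_top.mpr hsurj] at h1
    simp only [finrank_top] at h1
    rw [homLieTwists_eq_ker]
    have : Module.finrank K (Matrix (Fin 3) (Fin 3) K) = 9 := by
      simp [Module.finrank_matrix]
    have : Module.finrank K (Fin 3 → K) = 3 := by simp
    omega
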